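/- For nonnegative integers a, b, the identity ∑_{k=a}^{a+b} [k choose a]_q [k choose b]_q [a+b+1 choose k+1]_q (-1)^k q^{C(k+1,2) + C(a+1,2) + C(b+1,2) - (k+1)(a+b)} = (-1)^{a-b} holds in ℤ[q, q^{-1}], where C(m,2) = m(m-1)/2. -/

import Mathlib

open Polynomial Finset

/-- The q-integer `[n]_q = 1 + q + ⋯ + q^{n-1}` as a polynomial in `ℤ[q]`. -/
noncomputable def qint (n : ℕ) : Polynomial ℤ := ∑ i ∈ Finset.range n, X ^ i

/-- The q-factorial `[n]_q! = [n]_q [n-1]_q ⋯ [1]_q`. -/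
noncomputable def qfact : ℕ → Polynomial ℤ
  | 0 => 1
  | n + 1 => qint (n + 1) * qfact n

/-- The Gaussian (q-)binomial coefficient `[n choose k]_q` as a polynomial in `ℤ[q]`,
defined by the q-Pascal recurrence; it equals `∏_{i=1}^k (1-q^{n-i+1})/(1-q^i)` for
`0 ≤ k ≤ n` and `0` otherwise. -/
noncomputable def qbinom : ℕ → ℕ → Polynomial ℤ
  | _, 0 => 1
  | 0, _ + 1 => 0
  | n + 1, k + 1 => qbinom n k + X ^ (k + 1) * qbinom n (k + 1)

/-!
Multiplying by `∏_{j=1}^{a} (q^j - 1) · ∏_{j=1}^{b} (q^j - 1)` turns `[k choose a]_q [k choose b]_q`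
into `P(q^{k+1})`, where `P(y) = ∏_{j<a} (y q^{-1-j} - 1) ∏_{j<b} (y q^{-1-j} - 1)` has degree
`a + b`. With `N = a + b + 1`, the sum becomes, up to its missing `i = 0` term, the sum
`∑_{i=0}^{N} (-1)^i q^{C(i,2)} [N choose i]_q q^{-i(N-1)} P(q^i)`, and this vanishes: by the
q-binomial theorem `∑_i (-1)^i q^{C(i,2)} [N choose i]_q w^i = ∏_{j<N} (1 - q^j w)`, and each
monomial `y^s` of `P` contributes such a sum at `w = q^{s-(N-1)}`, which kills the factor
`j = N - 1 - s`. What is left is the `i = 0` term `P(1)`, which is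
`(-1)^{a+b} q^{-C(a+1,2)-C(b+1,2)}` times the factor we multiplied by; the power of `q` cancels
against the `q^{C(a+1,2)+C(b+1,2)}` in the summands.
-/

open LaurentPolynomial

@[simp] lemma qbinom_zero_right (n : ℕ) : qbinom n 0 = 1 := by cases n <;> rfl

lemma qbinom_succ_succ (n k : ℕ) :
    qbinom (n + 1) (k + 1) = qbinom n k + X ^ (k + 1) * qbinom n (k + 1) := rfl

lemma qbinom_eq_zero_of_lt : ∀ {n k : ℕ}, n < k → qbinom n k = 0
  | 0, _ + 1, _ => rfl
  | n + 1, k + 1, h => by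
    rw [qbinom_succ_succ, qbinom_eq_zero_of_lt (by omega), qbinom_eq_zero_of_lt (by omega),
      mul_zero, add_zero]

lemma Nat.choose_two_succ (n : ℕ) : (n + 1).choose 2 = n.choose 2 + n := by
  rw [Nat.choose_succ_succ', Nat.choose_one_right, add_comm]

section GaussBinomial

variable {A : Type*} [CommRing A] (q : A)

theorem sum_qbinom_mul_pow (n : ℕ) (w : A) :
    ∑ i ∈ range (n + 1), (-1) ^ i * q ^ i.choose 2 * aeval q (qbinom n i) * w ^ i =
      ∏ j ∈ range n, (1 - q ^ j * w) := by
  induction n generalizing w with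
  | zero => simp
  | succ n ih =>
    set g : ℕ → A := fun i => (-1) ^ i * q ^ i.choose 2 * aeval q (qbinom n i) * (q * w) ^ i
      with hg
    have pascal : ∀ i, (-1) ^ (i + 1) * q ^ (i + 1).choose 2 * aeval q (qbinom (n + 1) (i + 1)) *
        w ^ (i + 1) = -w * g i + g (i + 1) := fun i => by
      simp only [hg, qbinom_succ_succ, Nat.choose_two_succ, map_add, map_mul, map_pow, aeval_X]
      ring
    have hsum : ∑ i ∈ range (n + 1), g i = ∏ j ∈ range n, (1 - q ^ (j + 1) * w) :=
      (ih (q * w)).trans (by simp only [pow_succ, mul_assoc])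
    have hshift : ∑ i ∈ range (n + 1), g (i + 1) + 1 = ∑ i ∈ range (n + 1), g i := by
      have hlast : g (n + 1) = 0 := by simp [hg, qbinom_eq_zero_of_lt]
      have hfirst : g 0 = 1 := by simp [hg]
      rw [← hfirst, ← sum_range_succ', sum_range_succ _ (n + 1), hlast, add_zero]
    rw [sum_range_succ', sum_congr rfl fun i _ => pascal i, sum_add_distrib, ← mul_sum,
      prod_range_succ', ← hsum]
    simp only [pow_zero, Nat.choose_zero_succ, qbinom_zero_right, map_one, mul_one, one_mul]
    linear_combination hshift

theorem sum_qbinom_mul_pow_eq_zero {n m : ℕ} (hm : m < n) {w : A} (hw : q ^ m * w = 1) :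
    ∑ i ∈ range (n + 1), (-1) ^ i * q ^ i.choose 2 * aeval q (qbinom n i) * w ^ i = 0 := by
  rw [sum_qbinom_mul_pow]
  exact prod_eq_zero (mem_range.2 hm) (by rw [hw, sub_self])

theorem sum_qbinom_mul_eval_eq_zero {n : ℕ} {P : A[X]} (hP : P.natDegree < n) {x : A}
    (hx : q ^ (n - 1) * x = 1) :
    ∑ i ∈ range (n + 1),
      (-1) ^ i * q ^ i.choose 2 * aeval q (qbinom n i) * x ^ i * P.eval (q ^ i) = 0 := by
  simp_rw [eval_eq_sum_range' hP, mul_sum]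
  rw [sum_comm]
  refine sum_eq_zero fun s hs => ?_
  replace hs : s < n := mem_range.1 hs
  have hw : q ^ (n - 1 - s) * (x * q ^ s) = 1 := by
    rw [mul_left_comm, mul_comm, ← pow_add, Nat.sub_add_cancel (by omega), hx]
  rw [← mul_zero (P.coeff s), ← sum_qbinom_mul_pow_eq_zero q (by omega : n - 1 - s < n) hw,
    mul_sum]
  refine sum_congr rfl fun i _ => ?_
  ring

end GaussBinomial

-- `qFalling c c = ∏_{j=1}^{c} (q^j - 1)`, a q-analogue of `c!`.
noncomputable def qFalling (c : ℕ) (z : ℤ) : ℤ[T;T⁻¹] := ∏ j ∈ range c, (T (z - j) - 1)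

lemma qFalling_succ (c : ℕ) (z : ℤ) : qFalling (c + 1) z = qFalling c z * (T (z - c) - 1) :=
  prod_range_succ _ _

lemma qFalling_succ_succ (c : ℕ) (z : ℤ) :
    qFalling (c + 1) (z + 1) = (T (z + 1) - 1) * qFalling c z := by
  simp only [qFalling, prod_range_succ', Nat.cast_add, Nat.cast_one, Nat.cast_zero, sub_zero,
    add_sub_add_right_eq_sub, mul_comm]

lemma qFalling_natCast_eq_zero {c k : ℕ} (h : k < c) : qFalling c k = 0 :=
  prod_eq_zero (mem_range.2 h) (by rw [sub_self, T_zero, sub_self])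

lemma qFalling_self_ne_zero (c : ℕ) : qFalling c c ≠ 0 := by
  refine prod_ne_zero_iff.2 fun j hj => sub_ne_zero.2 fun h => ?_
  have := (AddMonoidAlgebra.single_left_inj (one_ne_zero : (1 : ℤ) ≠ 0)).1 (h.trans T_zero.symm)
  have := mem_range.1 hj
  omega

lemma toLaurent_qbinom_mul_qFalling_self (m c : ℕ) :
    toLaurent (qbinom m c) * qFalling c c = qFalling c m := by
  induction m generalizing c with
  | zero =>
    cases c with
    | zero => simp [qFalling]
    | succ c => simpa [qbinom] using (qFalling_natCast_eq_zero c.succ_pos).symm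
  | succ m ih =>
    cases c with
    | zero => simp [qFalling]
    | succ c =>
      have h2 := ih (c + 1)
      rw [qbinom_succ_succ, map_add, map_mul, toLaurent_X_pow]
      push_cast at h2 ⊢
      rw [qFalling_succ_succ, qFalling_succ] at h2
      rw [qFalling_succ_succ, qFalling_succ_succ]
      have hT : (T (c + 1) * T (m - c) : ℤ[T;T⁻¹]) = T (m + 1) := by rw [← T_add]; ring_nf
      linear_combination (T ((c : ℤ) + 1) - 1) * ih c + T ((c : ℤ) + 1) * h2 + qFalling c m * hT

lemma qFalling_neg_one (c : ℕ) :
    qFalling c (-1) = (-1) ^ c * T (-((c + 1).choose 2 : ℤ)) * qFalling c c := by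
  induction c with
  | zero => simp [qFalling]
  | succ c ih =>
    have h1 : (T (-((c + 1).choose 2 : ℤ)) : ℤ[T;T⁻¹]) =
        T (-((c + 2).choose 2 : ℤ)) * T (c + 1) := by
      rw [← T_add, Nat.choose_two_succ (c + 1)]; push_cast; ring_nf
    have h2 : (T (-((c + 1).choose 2 : ℤ)) * T (-1 - c) : ℤ[T;T⁻¹]) =
        T (-((c + 2).choose 2 : ℤ)) := by
      rw [← T_add, Nat.choose_two_succ (c + 1)]; push_cast; ring_nf
    rw [qFalling_succ, ih, Nat.cast_succ, qFalling_succ_succ]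
    linear_combination (-1) ^ c * qFalling c c * (h2 - h1)

lemma exists_eval_eq_qFalling (c : ℕ) (z : ℤ) :
    ∃ P : ℤ[T;T⁻¹][X], P.natDegree ≤ c ∧ ∀ i : ℕ, P.eval (T 1 ^ i) = qFalling c (i + z) := by
  refine ⟨∏ j ∈ range c, (Polynomial.C (T (z - j)) * X + Polynomial.C (-1)), ?_, fun i => ?_⟩
  · refine (natDegree_prod_le _ _).trans ((sum_le_sum fun j _ => natDegree_linear_le).trans ?_)
    simp
  · simp only [eval_prod, eval_add, eval_mul, eval_C, eval_X, T_pow, qFalling, ← T_add]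
    refine prod_congr rfl fun j _ => ?_
    ring_nf

lemma eval₂_castRingHom_T_one (p : ℤ[X]) :
    eval₂ (Int.castRingHom ℤ[T;T⁻¹]) (T 1) p = toLaurent p := by
  rw [Subsingleton.elim (Int.castRingHom ℤ[T;T⁻¹]) (algebraMap ℤ ℤ[T;T⁻¹]), ← aeval_def]
  simpa using aeval_algHom_apply toLaurentAlg X p

noncomputable def qDiffTerm (a b i : ℕ) : ℤ[T;T⁻¹] :=
  (-1) ^ i * toLaurent (qbinom (a + b + 1) i) * T (i.choose 2 - i * (a + b)) *
    (qFalling a (i - 1) * qFalling b (i - 1))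

lemma sum_qDiffTerm_eq_zero (a b : ℕ) : ∑ i ∈ range (a + b + 2), qDiffTerm a b i = 0 := by
  obtain ⟨Pa, hPa, hevala⟩ := exists_eval_eq_qFalling a (-1)
  obtain ⟨Pb, hPb, hevalb⟩ := exists_eval_eq_qFalling b (-1)
  have hdeg : (Pa * Pb).natDegree < a + b + 1 := natDegree_mul_le.trans_lt (by omega)
  have hx : (T 1 : ℤ[T;T⁻¹]) ^ (a + b + 1 - 1) * T (-(a + b)) = 1 := by
    rw [T_pow, ← T_add]; push_cast; ring_nf; exact T_zero
  have key := sum_qbinom_mul_eval_eq_zero (T 1) hdeg hx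
  simp only [aeval_def, algebraMap_int_eq, eval₂_castRingHom_T_one, eval_mul, hevala, hevalb]
    at key
  rw [← key]
  refine sum_congr rfl fun i _ => ?_
  rw [qDiffTerm, sub_eq_add_neg _ ((i : ℤ) * _), T_add, T_pow, T_pow]
  ring_nf

lemma qDiffTerm_zero (a b : ℕ) : qDiffTerm a b 0 = qFalling a (-1) * qFalling b (-1) := by
  simp [qDiffTerm]

lemma summand_mul_qFalling_self (a b k : ℕ) :
    toLaurent (qbinom k a * qbinom k b * qbinom (a + b + 1) (k + 1)) * (-1) ^ k *
        T (((k + 1).choose 2 : ℤ) + ((a + 1).choose 2 : ℤ) + ((b + 1).choose 2 : ℤ) -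
          ((k : ℤ) + 1) * ((a : ℤ) + b)) * (qFalling a a * qFalling b b) =
      -(T (((a + 1).choose 2 : ℤ) + (b + 1).choose 2) * qDiffTerm a b (k + 1)) := by
  have hT : (T (((k + 1).choose 2 : ℤ) + ((a + 1).choose 2 : ℤ) + ((b + 1).choose 2 : ℤ) -
      ((k : ℤ) + 1) * ((a : ℤ) + b)) : ℤ[T;T⁻¹]) =
      T (((a + 1).choose 2 : ℤ) + (b + 1).choose 2) *
        T ((k + 1).choose 2 - ((k + 1 : ℕ) : ℤ) * (a + b)) := by
    rw [← T_add]; push_cast; ring_nf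
  rw [qDiffTerm, hT, Nat.cast_succ, add_sub_cancel_right, map_mul, map_mul,
    ← toLaurent_qbinom_mul_qFalling_self k a, ← toLaurent_qbinom_mul_qFalling_self k b]
  ring

open LaurentPolynomial in
/-- `∑_{k=a}^{a+b} [k choose a]_q [k choose b]_q [a+b+1 choose k+1]_q
  (-1)^k q^{C(k+1,2)+C(a+1,2)+C(b+1,2)-(k+1)(a+b)} = (-1)^{a-b}` in `ℤ[q,q^{-1}]`. -/
theorem stmt13 (a b : ℕ) :
    ∑ k ∈ Finset.Icc a (a + b),
        Polynomial.toLaurent (qbinom k a * qbinom k b * qbinom (a + b + 1) (k + 1)) *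
          (-1) ^ k *
          T (((k + 1).choose 2 : ℤ) + ((a + 1).choose 2 : ℤ) + ((b + 1).choose 2 : ℤ) -
            ((k : ℤ) + 1) * ((a : ℤ) + b)) =
      (-1) ^ (a + b) := by
  refine mul_right_cancel₀ (mul_ne_zero (qFalling_self_ne_zero a) (qFalling_self_ne_zero b)) ?_
  have hsub : Icc a (a + b) ⊆ range (a + b + 1) := fun k hk =>
    mem_range.2 (Nat.lt_succ_of_le (mem_Icc.1 hk).2)
  rw [sum_subset hsub fun k hk hk' => ?_]
  · rw [sum_mul, sum_congr rfl fun k _ => summand_mul_qFalling_self a b k, sum_neg_distrib,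
      ← mul_sum]
    have hshift := sum_range_succ' (qDiffTerm a b) (a + b + 1)
    rw [sum_qDiffTerm_eq_zero, qDiffTerm_zero, qFalling_neg_one, qFalling_neg_one] at hshift
    have hT : (T (((a + 1).choose 2 : ℤ) + (b + 1).choose 2) *
        (T (-((a + 1).choose 2 : ℤ)) * T (-((b + 1).choose 2 : ℤ))) : ℤ[T;T⁻¹]) = 1 := by
      rw [← T_add, ← T_add]; ring_nf; exact T_zero
    linear_combination (T (((a + 1).choose 2 : ℤ) + (b + 1).choose 2)) * hshift +
      (-1) ^ (a + b) * qFalling a a * qFalling b b * hT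
  · have hka : k < a := by
      simp only [mem_Icc, mem_range] at hk hk'
      omega
    rw [qbinom_eq_zero_of_lt hka, map_mul, map_mul, map_zero]
    ring
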